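/- In the (2,2,2) scenario, for all nonnegative reals c0, c1, cTB with c0 + c1 + cTB = 1, the mixture c0 • P0 + c1 • P1 + cTB • PTB belongs to the local polytope L∞ if and only if cTB ≤ (1 - c1)/√2. -/

import Mathlib

open Matrix Kronecker ComplexOrder

/-- A (2,m,v) box: a family of conditional probability distributions. -/
def IsBox (m v : ℕ) (p : Fin m → Fin m → Fin v → Fin v → ℝ) : Prop :=
  (∀ x y a b, 0 ≤ p x y a b) ∧ ∀ x y, ∑ a, ∑ b, p x y a b = 1

/-- A product box: `p x y a b = f x a * g y b` for local response functions `f`, `g`. -/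
def IsProductBox (m v : ℕ) (p : Fin m → Fin m → Fin v → Fin v → ℝ) : Prop :=
  ∃ f g : Fin m → Fin v → ℝ,
    (∀ x a, 0 ≤ f x a) ∧ (∀ y b, 0 ≤ g y b) ∧
    (∀ x, ∑ a, f x a = 1) ∧ (∀ y, ∑ b, g y b = 1) ∧
    ∀ x y a b, p x y a b = f x a * g y b

/-- Membership in `Q_d`: the box is realizable by a shared quantum state of local
dimension `d` together with local POVMs. -/
def IsQuantumBox (d m v : ℕ) (p : Fin m → Fin m → Fin v → Fin v → ℝ) : Prop :=
  ∃ (ρ : Matrix ((Fin d) × (Fin d)) ((Fin d) × (Fin d)) ℂ)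
    (A B : Fin m → Fin v → Matrix (Fin d) (Fin d) ℂ),
    ρ.PosSemidef ∧ ρ.trace = 1 ∧
    (∀ x a, (A x a).PosSemidef) ∧ (∀ x, ∑ a, A x a = 1) ∧
    (∀ y b, (B y b).PosSemidef) ∧ (∀ y, ∑ b, B y b = 1) ∧
    ∀ x y a b, (ρ * (A x a ⊗ₖ B y b)).trace = (p x y a b : ℂ)

/-- Membership in `L_N`: the box is realizable using shared classical randomness
of dimension `N`. -/
def IsLocalBox (N m v : ℕ) (p : Fin m → Fin m → Fin v → Fin v → ℝ) : Prop :=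
  ∃ (w : Fin N → ℝ) (f g : Fin N → Fin m → Fin v → ℝ),
    (∀ l, 0 ≤ w l) ∧ (∑ l, w l = 1) ∧
    (∀ l x a, 0 ≤ f l x a) ∧ (∀ l y b, 0 ≤ g l y b) ∧
    (∀ l x, ∑ a, f l x a = 1) ∧ (∀ l y, ∑ b, g l y b = 1) ∧
    ∀ x y a b, p x y a b = ∑ l, w l * f l x a * g l y b

/-- The maximally mixed box `P0`. -/
noncomputable def P0 : Fin 2 → Fin 2 → Fin 2 → Fin 2 → ℝ :=
  fun _x _y _a _b => 1 / 4

/-- The deterministic box `P1`: both parties always output `1`. -/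
def P1 : Fin 2 → Fin 2 → Fin 2 → Fin 2 → ℝ :=
  fun _x _y a b => if a = 1 ∧ b = 1 then 1 else 0

/-- The Tsirelson-bound-achieving box `PTB`. -/
noncomputable def PTB : Fin 2 → Fin 2 → Fin 2 → Fin 2 → ℝ :=
  fun x y a b =>
    (2 + (-1 : ℝ) ^ ((a : ℕ) + (b : ℕ) + (x : ℕ) * (y : ℕ)) * Real.sqrt 2) / 8

/-!
The CHSH functional `p ↦ ∑ (-1)^(a+b+xy) p[ab|xy]` is linear and at most 2 on product boxes
(with `A_x = f x 0 - f x 1`, `B_y = g y 0 - g y 1 ∈ [-1, 1]` it equals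
`A₀(B₀+B₁) + A₁(B₀-B₁) ≤ |B₀+B₁| + |B₀-B₁| ≤ 2`), hence on `L∞`. It takes the values
`0, 2, 2√2` on `P0, P1, PTB`, which gives necessity. Conversely `PTB = √2 • PL + (1 - √2) • P0`
for the local box `PL` of CHSH value 2, so the mixture is the convex combination
`(c0 + (1 - √2) cTB) • P0 + c1 • P1 + √2 cTB • PL`, whose weights are nonnegative exactly when
`√2 cTB ≤ 1 - c1`.
-/

local notation "Box₂₂" => Fin 2 → Fin 2 → Fin 2 → Fin 2 → ℝ

noncomputable def chsh : Box₂₂ →ₗ[ℝ] ℝ where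
  toFun p := ∑ x : Fin 2, ∑ y : Fin 2, ∑ a : Fin 2, ∑ b : Fin 2,
    (-1 : ℝ) ^ ((a : ℕ) + (b : ℕ) + (x : ℕ) * (y : ℕ)) * p x y a b
  map_add' p q := by simp only [Pi.add_apply, mul_add, Finset.sum_add_distrib]
  map_smul' c p := by
    simp only [Pi.smul_apply, smul_eq_mul, Finset.mul_sum, RingHom.id_apply]
    ring_nf

theorem chsh_correlator_le_two {A₀ A₁ B₀ B₁ : ℝ} (hA₀ : |A₀| ≤ 1) (hA₁ : |A₁| ≤ 1)
    (hB₀ : |B₀| ≤ 1) (hB₁ : |B₁| ≤ 1) : A₀ * B₀ + A₀ * B₁ + A₁ * B₀ - A₁ * B₁ ≤ 2 :=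
  calc A₀ * B₀ + A₀ * B₁ + A₁ * B₀ - A₁ * B₁ = A₀ * (B₀ + B₁) + A₁ * (B₀ - B₁) := by ring
    _ ≤ |B₀ + B₁| + |B₀ - B₁| := by
        have hmul {A u : ℝ} (hA : |A| ≤ 1) : A * u ≤ |u| :=
          (le_abs_self _).trans (abs_mul A u ▸ mul_le_of_le_one_left (abs_nonneg u) hA)
        exact add_le_add (hmul hA₀) (hmul hA₁)
    _ ≤ 2 := by
        obtain ⟨hB₀l, hB₀u⟩ := abs_le.1 hB₀
        obtain ⟨hB₁l, hB₁u⟩ := abs_le.1 hB₁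
        rcases abs_cases (B₀ + B₁) with ⟨h, -⟩ | ⟨h, -⟩ <;>
          rcases abs_cases (B₀ - B₁) with ⟨h', -⟩ | ⟨h', -⟩ <;> linarith

theorem abs_sub_le_one_of_add_eq_one {s t : ℝ} (hs : 0 ≤ s) (ht : 0 ≤ t) (h : s + t = 1) :
    |s - t| ≤ 1 :=
  abs_sub_le_iff.2 ⟨by linarith, by linarith⟩

theorem chsh_le_two_of_isProductBox {p : Box₂₂} (hp : IsProductBox 2 2 p) : chsh p ≤ 2 := by
  obtain ⟨f, g, hf, hg, hf₁, hg₁, hp⟩ := hp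
  have hA (x : Fin 2) : |f x 0 - f x 1| ≤ 1 :=
    abs_sub_le_one_of_add_eq_one (hf x 0) (hf x 1) (by simpa [Fin.sum_univ_two] using hf₁ x)
  have hB (y : Fin 2) : |g y 0 - g y 1| ≤ 1 :=
    abs_sub_le_one_of_add_eq_one (hg y 0) (hg y 1) (by simpa [Fin.sum_univ_two] using hg₁ y)
  convert chsh_correlator_le_two (hA 0) (hA 1) (hB 0) (hB 1) using 1
  simp [chsh, Fin.sum_univ_two, hp]
  ring

theorem chsh_le_two_of_mem_convexHull {p : Box₂₂}
    (hp : p ∈ convexHull ℝ {q : Box₂₂ | IsProductBox 2 2 q}) : chsh p ≤ 2 :=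
  convexHull_min (fun _ => chsh_le_two_of_isProductBox)
    (convex_halfSpace_le chsh.isLinear 2) hp

theorem chsh_P0 : chsh P0 = 0 := by
  norm_num [chsh, P0, Fin.sum_univ_two]

theorem chsh_P1 : chsh P1 = 2 := by
  norm_num [chsh, P1, Fin.sum_univ_two]

theorem chsh_PTB : chsh PTB = 2 * √2 := by
  norm_num [chsh, PTB, Fin.sum_univ_two]
  ring

def detBox {m v : ℕ} (F G : Fin m → Fin v) : Fin m → Fin m → Fin v → Fin v → ℝ :=
  fun x y a b => (if a = F x then 1 else 0) * (if b = G y then 1 else 0)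

theorem isProductBox_detBox {m v : ℕ} (F G : Fin m → Fin v) : IsProductBox m v (detBox F G) :=
  ⟨fun x a => if a = F x then 1 else 0, fun y b => if b = G y then 1 else 0,
    fun _ _ => by positivity, fun _ _ => by positivity,
    fun x => by simp, fun y => by simp, fun _ _ _ _ => rfl⟩

theorem P1_eq_detBox : P1 = detBox (1 : Fin 2 → Fin 2) 1 := by
  funext x y a b
  by_cases a = 1 <;> simp [P1, detBox, *]

theorem isProductBox_P0 : IsProductBox 2 2 P0 :=
  ⟨fun _ _ => 1 / 2, fun _ _ => 1 / 2, by norm_num, by norm_num,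
    fun _ => by norm_num, fun _ => by norm_num, fun _ _ _ _ => by norm_num [P0]⟩

theorem Convex.smul_add_smul_add_smul_mem {E : Type*} [AddCommGroup E] [Module ℝ E] {s : Set E}
    (hs : Convex ℝ s) {x y z : E} (hx : x ∈ s) (hy : y ∈ s) (hz : z ∈ s) {a b c : ℝ}
    (ha : 0 ≤ a) (hb : 0 ≤ b) (hc : 0 ≤ c) (habc : a + b + c = 1) :
    a • x + b • y + c • z ∈ s := by
  have := hs.sum_mem (t := Finset.univ) (w := ![a, b, c]) (z := ![x, y, z])
    (by simp [Fin.forall_fin_succ, ha, hb, hc]) (by simp [Fin.sum_univ_three, habc])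
    (by simp [Fin.forall_fin_succ, hx, hy, hz])
  simpa [Fin.sum_univ_three] using this

/-- `PTB` with its correlations damped by `1/√2`, so that it sits on the CHSH facet. -/
noncomputable def PL : Box₂₂ :=
  fun x y a b => (2 + (-1 : ℝ) ^ ((a : ℕ) + (b : ℕ) + (x : ℕ) * (y : ℕ))) / 8

theorem PTB_eq_smul_PL_add_smul_P0 : PTB = √2 • PL + (1 - √2) • P0 := by
  funext x y a b
  simp only [PTB, PL, P0, Pi.add_apply, Pi.smul_apply, smul_eq_mul]
  ring

/-- Each of these deterministic strategies wins the CHSH game (`a + b ≡ x y`) on three of the four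
input pairs, each pair is lost by exactly two of them, and the list is closed under flipping
both outputs; their average is therefore `PL`. -/
def chshOptimalStrategy : Fin 8 → (Fin 2 → Fin 2) × (Fin 2 → Fin 2)
  | 0 => (![0, 0], ![0, 0])
  | 1 => (![1, 1], ![1, 1])
  | 2 => (![0, 1], ![0, 0])
  | 3 => (![1, 0], ![1, 1])
  | 4 => (![0, 0], ![0, 1])
  | 5 => (![1, 1], ![1, 0])
  | 6 => (![0, 1], ![1, 0])
  | 7 => (![1, 0], ![0, 1])

theorem PL_eq_sum_detBox : PL =
    ∑ i : Fin 8, (1 / 8 : ℝ) • detBox (chshOptimalStrategy i).1 (chshOptimalStrategy i).2 := by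
  funext x y a b
  simp only [Finset.sum_apply, Pi.smul_apply, smul_eq_mul, Fin.sum_univ_eight]
  fin_cases x <;> fin_cases y <;> fin_cases a <;> fin_cases b <;>
    norm_num [PL, chshOptimalStrategy, detBox]

theorem PL_mem_convexHull : PL ∈ convexHull ℝ {p : Box₂₂ | IsProductBox 2 2 p} := by
  rw [PL_eq_sum_detBox]
  exact (convex_convexHull ℝ _).sum_mem (fun _ _ => by norm_num) (by simp)
    (fun i _ => subset_convexHull ℝ _ (isProductBox_detBox _ _))

theorem triangle_01TB_local_boundary_general (c0 c1 cTB : ℝ)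
    (h1 : 0 ≤ c1) (hTB : 0 ≤ cTB) (hsum : c0 + c1 + cTB = 1) :
    (c0 • P0 + c1 • P1 + cTB • PTB) ∈
        convexHull ℝ
          {p : Fin 2 → Fin 2 → Fin 2 → Fin 2 → ℝ | IsProductBox 2 2 p} ↔
      cTB ≤ (1 - c1) / Real.sqrt 2 := by
  have hs2 : (0 : ℝ) < √2 := by positivity
  rw [le_div_iff₀ hs2]
  constructor
  · intro h
    have hle := chsh_le_two_of_mem_convexHull h
    simp only [map_add, map_smul, chsh_P0, chsh_P1, chsh_PTB, smul_eq_mul] at hle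
    linarith
  · intro h
    have hmix : c0 • P0 + c1 • P1 + cTB • PTB =
        (c0 + (1 - √2) * cTB) • P0 + c1 • P1 + (√2 * cTB) • PL := by
      rw [PTB_eq_smul_PL_add_smul_P0]; module
    rw [hmix]
    exact Convex.smul_add_smul_add_smul_mem (E := Box₂₂) (convex_convexHull ℝ _)
      (subset_convexHull ℝ _ isProductBox_P0)
      (subset_convexHull ℝ _ (P1_eq_detBox ▸ isProductBox_detBox _ _)) PL_mem_convexHull
      (by linarith) h1 (by positivity) (by linear_combination hsum)

/-- the mixture `c0•P0 + c1•P1 + cTB•PTB` lies in the local polytope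
iff `cTB ≤ (1 - c1)/√2`. -/
theorem triangle_01TB_local_boundary (c0 c1 cTB : ℝ)
    (h0 : 0 ≤ c0) (h1 : 0 ≤ c1) (hTB : 0 ≤ cTB) (hsum : c0 + c1 + cTB = 1) :
    (c0 • P0 + c1 • P1 + cTB • PTB) ∈
        convexHull ℝ
          {p : Fin 2 → Fin 2 → Fin 2 → Fin 2 → ℝ | IsProductBox 2 2 p} ↔
      cTB ≤ (1 - c1) / Real.sqrt 2 :=
  triangle_01TB_local_boundary_general c0 c1 cTB h1 hTB hsum
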